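/- Let H be a bialgebra over a field K of characteristic zero, n ≥ 1, and x ∈ H with Δ̃⁽ⁿ⁾(x) = 0. Then Δ̃⁽ⁿ⁻¹⁾(x) ∈ Prim(H)^{⊗n}. -/

import Mathlib

open TensorProduct


open TensorProduct

universe u v

/-- A bundled `K`-module, used to form iterated tensor powers. -/
structure ModPack (K : Type u) [CommSemiring K] : Type (max u (v + 1)) where
  carrier : Type v
  [acg : AddCommGroup carrier]
  [mod : Module K carrier]

attribute [instance] ModPack.acg ModPack.mod

/-- `tpk K H n` is the `(n+1)`-fold tensor power `H ⊗ (H ⊗ (⋯ ⊗ H))`. -/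
noncomputable def tpk (K : Type u) [CommSemiring K]
    (H : Type v) [AddCommGroup H] [Module K H] : ℕ → ModPack.{u, v} K
  | 0 => ⟨H⟩
  | n + 1 => ⟨H ⊗[K] (tpk K H n).carrier⟩

/-- The reduced coproduct `Δ̃(x) = Δ(x) - 1 ⊗ x - x ⊗ 1 + ε(x) (1 ⊗ 1)`
(the unique linear map with `Δ̃(1) = 0` and `Δ̃(x) = Δ(x) - 1 ⊗ x - x ⊗ 1` on `ker ε`). -/
noncomputable def redComul (K : Type u) [CommSemiring K]
    (H : Type v) [Ring H] [Bialgebra K H] : H →ₗ[K] H ⊗[K] H :=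
  Coalgebra.comul
    - TensorProduct.mk K H H 1
    - (TensorProduct.mk K H H).flip 1
    + (Coalgebra.counit (R := K)).smulRight ((1 : H) ⊗ₜ[K] (1 : H))

/-- Applying `Δ̃` to the first tensor factor: `Δ̃ ⊗ id^{⊗ n}`. -/
noncomputable def frontMap (K : Type u) [CommSemiring K]
    (H : Type v) [Ring H] [Bialgebra K H] :
    (n : ℕ) → (tpk K H n).carrier →ₗ[K] (tpk K H (n + 1)).carrier
  | 0 => redComul K H
  | n + 1 =>
      (TensorProduct.assoc K H H (tpk K H n).carrier).toLinearMap
        ∘ₗ TensorProduct.map (redComul K H) LinearMap.id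

/-- The iterated reduced coproducts: `Δ̃⁽⁰⁾ = ρ` (with `ρ(x) = x - ε(x)1`), `Δ̃⁽¹⁾ = Δ̃`,
and `Δ̃⁽ᵏ⁺¹⁾ = (Δ̃ ⊗ id^{⊗ k}) ∘ Δ̃⁽ᵏ⁾`. -/
noncomputable def redIter (K : Type u) [CommSemiring K]
    (H : Type v) [Ring H] [Bialgebra K H] :
    (n : ℕ) → H →ₗ[K] (tpk K H n).carrier
  | 0 => LinearMap.id - (Coalgebra.counit (R := K)).smulRight (1 : H)
  | 1 => redComul K H
  | n + 2 => frontMap K H (n + 1) ∘ₗ redIter K H (n + 1)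

/-- `x` is a primitive element of the bialgebra `H`: `Δ(x) = x ⊗ 1 + 1 ⊗ x`. -/
def IsPrimitive (K : Type*) {H : Type*} [CommSemiring K] [Ring H] [Bialgebra K H] (x : H) : Prop :=
  Coalgebra.comul (R := K) x = x ⊗ₜ[K] (1 : H) + (1 : H) ⊗ₜ[K] x

/-- The image of `P ⊗ P ⊗ ⋯ ⊗ P` (`n+1` factors) inside the `(n+1)`-fold tensor power of `H`:
the submodule `P^{⊗(n+1)}`. -/
noncomputable def nestSub (K : Type*) [Field K]
    {H : Type*} [AddCommGroup H] [Module K H] (P : Submodule K H) :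
    (n : ℕ) → Submodule K (tpk K H n).carrier
  | 0 => P
  | n + 1 => LinearMap.range (TensorProduct.map P.subtype (nestSub K P n).subtype)

/-!
Let `ρ = Δ̃⁽⁰⁾ : x ↦ x - ε(x)1`, the projection onto `ker ε`. Then `Δ̃ = (ρ ⊗ ρ) ∘ Δ`, and since
`ρ² = ρ` and `Δ̃ ∘ ρ = Δ̃`, the reduced coproduct is coassociative and absorbs `ρ` in either
tensor factor; hence `Δ̃⁽ᵐ⁺¹⁾ = (id ⊗ Δ̃⁽ᵐ⁾) ∘ Δ̃`. If `Δ̃ z = 0` then `ρ z` is primitive, which is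
the case `n = 0`.

For the induction step let `y = Δ̃⁽ⁿ⁺¹⁾ x` with `Δ̃⁽ⁿ⁺²⁾ x = 0`. First, `(Δ̃ ⊗ id) y = 0` and
`y = (ρ ⊗ id) y`, so `y ∈ Prim ⊗ H^{⊗(n+1)}` because tensoring over a field preserves kernels.
Second, `y = (id ⊗ Δ̃⁽ⁿ⁾)(Δ̃ x)` with `(id ⊗ Δ̃⁽ⁿ⁺¹⁾)(Δ̃ x) = 0`, so by the induction hypothesis
(tensored with `H`) `y ∈ H ⊗ Prim^{⊗(n+1)}`. The intersection of these two is `Prim^{⊗(n+2)}`.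
-/

open LinearMap

section Flat

variable {R : Type*} [CommRing R] {A B C M : Type*} [AddCommGroup A] [Module R A]
  [AddCommGroup B] [Module R B] [AddCommGroup C] [Module R C] [AddCommGroup M] [Module R M]
  {f : A →ₗ[R] B} {g : A →ₗ[R] C} {V : Submodule R C}

theorem rTensor_mem_range_of_map_ker_le [Module.Flat R M] (hfg : (ker f).map g ≤ V)
    {z : A ⊗[R] M} (hz : f.rTensor M z = 0) :
    g.rTensor M z ∈ range (V.subtype.rTensor M) := by
  obtain ⟨u, rfl⟩ := (Module.Flat.rTensor_exact M f.exact_subtype_ker_map z).mp hz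
  let j : ker f →ₗ[R] V := (g ∘ₗ (ker f).subtype).codRestrict V fun a ↦ hfg ⟨a, a.2, rfl⟩
  exact ⟨j.rTensor M u, by simp only [← comp_apply, ← rTensor_comp]; rfl⟩

theorem lTensor_mem_range_of_map_ker_le [Module.Flat R M] (hfg : (ker f).map g ≤ V)
    {z : M ⊗[R] A} (hz : f.lTensor M z = 0) :
    g.lTensor M z ∈ range (V.subtype.lTensor M) := by
  obtain ⟨u, rfl⟩ := (Module.Flat.lTensor_exact M f.exact_subtype_ker_map z).mp hz
  let j : ker f →ₗ[R] V := (g ∘ₗ (ker f).subtype).codRestrict V fun a ↦ hfg ⟨a, a.2, rfl⟩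
  exact ⟨j.lTensor M u, by simp only [← comp_apply, ← lTensor_comp]; rfl⟩

/-- Over a field this is `(U ⊗ M) ∩ (A ⊗ W) = U ⊗ W`. -/
theorem range_rTensor_inf_range_lTensor_le_range_map (U : Submodule R A) (W : Submodule R M)
    [Module.Flat R (M ⧸ W)] :
    range (U.subtype.rTensor M) ⊓ range (W.subtype.lTensor A)
      ≤ range (TensorProduct.map U.subtype W.subtype) := by
  rintro _ ⟨⟨u, rfl⟩, hW⟩
  have hq : W.mkQ.lTensor A (U.subtype.rTensor M u) = 0 := by
    rwa [← mem_ker, lTensor_mkQ]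
  have hu : W.mkQ.lTensor U u = 0 := by
    apply Module.Flat.rTensor_preserves_injective_linearMap (M := M ⧸ W) _ U.injective_subtype
    rw [← comp_apply, rTensor_comp_lTensor, ← lTensor_comp_rTensor, comp_apply, hq, map_zero]
  obtain ⟨v, rfl⟩ : u ∈ range (W.subtype.lTensor U) := by rwa [← lTensor_mkQ]
  exact ⟨v, by rw [← comp_apply, rTensor_comp_lTensor]⟩

end Flat

section Bialgebra

variable (K : Type u) [CommRing K] (H : Type v) [Ring H] [Bialgebra K H]

noncomputable def projKerCounit : H →ₗ[K] H :=
  LinearMap.id - (Coalgebra.counit (R := K)).smulRight (1 : H)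

theorem projKerCounit_apply (x : H) :
    projKerCounit K H x = x - Coalgebra.counit (R := K) x • (1 : H) :=
  rfl

theorem counit_projKerCounit (x : H) : Coalgebra.counit (R := K) (projKerCounit K H x) = 0 := by
  simp [projKerCounit_apply]

theorem projKerCounit_comp_self : projKerCounit K H ∘ₗ projKerCounit K H = projKerCounit K H := by
  ext x
  rw [comp_apply, projKerCounit_apply K H (projKerCounit K H x), counit_projKerCounit, zero_smul,
    sub_zero]

theorem redComul_apply (x : H) :
    redComul K H x = Coalgebra.comul x - (1 : H) ⊗ₜ[K] x - x ⊗ₜ[K] (1 : H)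
      + Coalgebra.counit (R := K) x • ((1 : H) ⊗ₜ[K] (1 : H)) :=
  rfl

theorem lTensor_counit_smulRight_comul (x : H) :
    ((Coalgebra.counit (R := K) (A := H)).smulRight (1 : H)).lTensor H (Coalgebra.comul x)
      = x ⊗ₜ[K] (1 : H) := by
  change (toSpanSingleton K H 1 ∘ₗ Coalgebra.counit).lTensor H _ = _
  simp [lTensor_comp]

theorem rTensor_counit_smulRight_comul (x : H) :
    ((Coalgebra.counit (R := K) (A := H)).smulRight (1 : H)).rTensor H (Coalgebra.comul x)
      = (1 : H) ⊗ₜ[K] x := by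
  change (toSpanSingleton K H 1 ∘ₗ Coalgebra.counit).rTensor H _ = _
  simp [rTensor_comp]

theorem redComul_eq_map_comp_comul :
    redComul K H
      = TensorProduct.map (projKerCounit K H) (projKerCounit K H) ∘ₗ Coalgebra.comul := by
  ext x
  simp only [comp_apply, ← rTensor_comp_lTensor, projKerCounit, lTensor_sub, rTensor_sub,
    lTensor_id, rTensor_id, LinearMap.sub_apply, id_apply, lTensor_counit_smulRight_comul,
    map_sub, rTensor_counit_smulRight_comul, rTensor_tmul, smulRight_apply, ← smul_tmul',
    redComul_apply]
  abel

theorem redComul_one : redComul K H 1 = 0 := by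
  rw [redComul_apply, Bialgebra.comul_one, Algebra.TensorProduct.one_def, Bialgebra.counit_one,
    one_smul]
  abel

theorem redComul_comp_projKerCounit : redComul K H ∘ₗ projKerCounit K H = redComul K H := by
  ext x
  simp [projKerCounit_apply, redComul_one]

theorem rTensor_projKerCounit_comp_redComul :
    (projKerCounit K H).rTensor H ∘ₗ redComul K H = redComul K H := by
  rw [redComul_eq_map_comp_comul, ← comp_assoc, rTensor_comp_map, projKerCounit_comp_self]

theorem lTensor_projKerCounit_comp_redComul :
    (projKerCounit K H).lTensor H ∘ₗ redComul K H = redComul K H := by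
  rw [redComul_eq_map_comp_comul, ← comp_assoc, lTensor_comp_map, projKerCounit_comp_self]

/-- Both sides are `(ρ ⊗ ρ ⊗ ρ) ∘ Δ⁽²⁾` for `ρ = projKerCounit`, since `Δ̃ ∘ ρ = Δ̃`. -/
theorem redComul_coassoc :
    (TensorProduct.assoc K H H H).toLinearMap ∘ₗ (redComul K H).rTensor H ∘ₗ redComul K H
      = (redComul K H).lTensor H ∘ₗ redComul K H := by
  set ρ := projKerCounit K H
  have hL : (redComul K H).rTensor H ∘ₗ TensorProduct.map ρ ρ
      = TensorProduct.map (TensorProduct.map ρ ρ) ρ ∘ₗ (Coalgebra.comul (R := K)).rTensor H := by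
    rw [rTensor_comp_map, redComul_comp_projKerCounit, map_comp_rTensor,
      ← redComul_eq_map_comp_comul]
  have hR : TensorProduct.map ρ (TensorProduct.map ρ ρ) ∘ₗ (Coalgebra.comul (R := K)).lTensor H
      = (redComul K H).lTensor H ∘ₗ TensorProduct.map ρ ρ := by
    rw [map_comp_lTensor, ← redComul_eq_map_comp_comul, lTensor_comp_map,
      redComul_comp_projKerCounit]
  calc _ = (TensorProduct.assoc K H H H).toLinearMap ∘ₗ
          ((redComul K H).rTensor H ∘ₗ TensorProduct.map ρ ρ) ∘ₗ Coalgebra.comul := by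
        nth_rw 2 [redComul_eq_map_comp_comul]; rfl
    _ = ((TensorProduct.assoc K H H H).toLinearMap ∘ₗ TensorProduct.map (TensorProduct.map ρ ρ) ρ)
          ∘ₗ (Coalgebra.comul (R := K)).rTensor H ∘ₗ Coalgebra.comul := by
        rw [hL]; rfl
    _ = TensorProduct.map ρ (TensorProduct.map ρ ρ) ∘ₗ ((TensorProduct.assoc K H H H).toLinearMap
          ∘ₗ (Coalgebra.comul (R := K)).rTensor H ∘ₗ Coalgebra.comul) := by
        rw [← TensorProduct.map_map_comp_assoc_eq]; rfl
    _ = (TensorProduct.map ρ (TensorProduct.map ρ ρ) ∘ₗ (Coalgebra.comul (R := K)).lTensor H)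
          ∘ₗ Coalgebra.comul := by
        rw [Coalgebra.coassoc]; rfl
    _ = _ := by rw [hR, comp_assoc, ← redComul_eq_map_comp_comul]

theorem redIter_succ (m : ℕ) :
    redIter K H (m + 1) = (redIter K H m).lTensor H ∘ₗ redComul K H := by
  induction m with
  | zero => exact (lTensor_projKerCounit_comp_redComul K H).symm
  | succ m ih =>
    have hA : ((redIter K H m).lTensor H).lTensor H ∘ₗ (TensorProduct.assoc K H H H).toLinearMap
        = (TensorProduct.assoc K H H _).toLinearMap ∘ₗ (redIter K H m).lTensor (H ⊗[K] H) := by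
      rw [lTensor, lTensor, lTensor, TensorProduct.map_map_comp_assoc_eq, TensorProduct.map_id]
    have hcoassoc : (TensorProduct.assoc K H H _).toLinearMap ∘ₗ (redComul K H).rTensor _
        ∘ₗ (redIter K H m).lTensor H ∘ₗ redComul K H
        = ((redIter K H m).lTensor H ∘ₗ redComul K H).lTensor H ∘ₗ redComul K H :=
      calc _ = ((TensorProduct.assoc K H H _).toLinearMap ∘ₗ (redIter K H m).lTensor (H ⊗[K] H))
            ∘ₗ (redComul K H).rTensor H ∘ₗ redComul K H := by
            rw [← comp_assoc (redComul K H), rTensor_comp_lTensor, ← lTensor_comp_rTensor]; rfl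
        _ = ((redIter K H m).lTensor H).lTensor H ∘ₗ ((TensorProduct.assoc K H H H).toLinearMap
            ∘ₗ (redComul K H).rTensor H ∘ₗ redComul K H) := by
            rw [← hA]; rfl
        _ = _ := by rw [redComul_coassoc, lTensor_comp]; rfl
    change frontMap K H (m + 1) ∘ₗ redIter K H (m + 1) = _
    rw [ih]
    exact hcoassoc

theorem redIter_succ_apply (m : ℕ) (x : H) :
    redIter K H (m + 1) x = (redIter K H m).lTensor H (redComul K H x) :=
  LinearMap.congr_fun (redIter_succ K H m) x

theorem rTensor_projKerCounit_redIter (m : ℕ) (x : H) :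
    (projKerCounit K H).rTensor _ (redIter K H (m + 1) x) = redIter K H (m + 1) x := by
  rw [redIter_succ_apply, ← comp_apply, rTensor_comp_lTensor, ← lTensor_comp_rTensor,
    comp_apply, ← comp_apply (g := redComul K H), rTensor_projKerCounit_comp_redComul]

theorem isPrimitive_projKerCounit {x : H} (hx : redComul K H x = 0) :
    IsPrimitive K (projKerCounit K H x) := by
  have hy : redComul K H (projKerCounit K H x) = 0 := by
    rw [← comp_apply, redComul_comp_projKerCounit, hx]
  rw [redComul_apply, counit_projKerCounit, zero_smul, add_zero, sub_sub, sub_eq_zero] at hy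
  rw [IsPrimitive, hy, add_comm]

end Bialgebra

section Field

variable (K : Type u) [Field K] (H : Type v) [Ring H] [Bialgebra K H] (P : Submodule K H)

theorem map_projKerCounit_ker_redComul_le (hP : ∀ x, IsPrimitive K x → x ∈ P) :
    (ker (redComul K H)).map (projKerCounit K H) ≤ P := by
  rintro _ ⟨x, hx, rfl⟩
  exact hP _ (isPrimitive_projKerCounit K H hx)

theorem map_redIter_ker_redIter_succ_le (hP : ∀ x, IsPrimitive K x → x ∈ P) (n : ℕ) :
    (ker (redIter K H (n + 1))).map (redIter K H n) ≤ nestSub K P n := by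
  induction n with
  | zero => exact map_projKerCounit_ker_redComul_le K H P hP
  | succ n ih =>
    rintro _ ⟨x, hx, rfl⟩
    apply range_rTensor_inf_range_lTensor_le_range_map P (nestSub K P n)
    constructor
    · have h : (redComul K H).rTensor _ (redIter K H (n + 1) x) = 0 :=
        (TensorProduct.assoc K H H _).injective (by rw [map_zero]; exact hx)
      rw [← rTensor_projKerCounit_redIter]
      exact rTensor_mem_range_of_map_ker_le (map_projKerCounit_ker_redComul_le K H P hP) h
    · rw [redIter_succ_apply]
      exact lTensor_mem_range_of_map_ker_le ih ((redIter_succ_apply K H _ x).symm.trans hx)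

end Field

theorem statement13_general {K : Type*} [Field K]
    {H : Type*} [Ring H] [Bialgebra K H]
    (P : Submodule K H) (hP : ∀ x : H, x ∈ P ↔ IsPrimitive K x)
    (n : ℕ) (x : H) (hx : redIter K H (n + 1) x = 0) :
    redIter K H n x ∈ nestSub K P n :=
  map_redIter_ker_redIter_succ_le K H P (fun y ↦ (hP y).2) n ⟨x, hx, rfl⟩

/-- If `Δ̃⁽ⁿ⁺¹⁾(x) = 0` then `Δ̃⁽ⁿ⁾(x) ∈ Prim(H)^{⊗(n+1)}`. -/
theorem statement13 {K : Type*} [Field K] [CharZero K]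
    {H : Type*} [Ring H] [Bialgebra K H]
    (P : Submodule K H) (hP : ∀ x : H, x ∈ P ↔ IsPrimitive K x)
    (n : ℕ) (x : H) (hx : redIter K H (n + 1) x = 0) :
    redIter K H n x ∈ nestSub K P n :=
  statement13_general P hP n x hx
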